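/- The 4×4 real symmetric matrix H(t) = [[0, -2cs, -1, 2cs], [-2cs, 0, -2s², 2cs], [-1, -2s², -4cs, 0], [2cs, 2cs, 0, -4cs]] with c = cos t, s = sin t is nonsingular for all sufficiently small t ≠ 0, and its signature is 0 (two positive and two negative eigenvalues) for all sufficiently small t ≠ 0. -/
import Mathlib


open Matrix

/-- The Hessian of the perturbed trace function at a corner point. -/
noncomputable def Hmat (t : ℝ) : Matrix (Fin 4) (Fin 4) ℝ :=
  !![0, -2 * Real.cos t * Real.sin t, -1, 2 * Real.cos t * Real.sin t;
     -2 * Real.cos t * Real.sin t, 0, -2 * Real.sin t ^ 2, 2 * Real.cos t * Real.sin t;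
     -1, -2 * Real.sin t ^ 2, -4 * Real.cos t * Real.sin t, 0;
     2 * Real.cos t * Real.sin t, 2 * Real.cos t * Real.sin t, 0,
       -4 * Real.cos t * Real.sin t]

noncomputable def P0aux (c s : ℝ) : Matrix (Fin 4) (Fin 4) ℝ :=
  !![1, 2*c*s - 2*s^2, 4*c*s^3 - 4*s^4, 16*c^3*s^3 - 4*c*s^3 + 8*c*s^5;
     0, 2 - 4*c*s, 2*s^2 + 2*c*s - 8*c^2*s^2, 2*c*s + 16*c^3*s^3 - 4*c*s^3;
     -1, -2*c*s + 2*s^2, 4*c*s^3 - 4*c^2*s^2, -4*c^2*s^2 - 8*c^2*s^4;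
     0, 0, 0, 16*c^3*s^3 - 8*c*s^3]

noncomputable def P0auxT (c s : ℝ) : Matrix (Fin 4) (Fin 4) ℝ :=
  !![1, 0, -1, 0;
     2*c*s - 2*s^2, 2 - 4*c*s, -2*c*s + 2*s^2, 0;
     4*c*s^3 - 4*s^4, 2*s^2 + 2*c*s - 8*c^2*s^2, 4*c*s^3 - 4*c^2*s^2, 0;
     16*c^3*s^3 - 4*c*s^3 + 8*c*s^5, 2*c*s + 16*c^3*s^3 - 4*c*s^3, -4*c^2*s^2 - 8*c^2*s^4,
       16*c^3*s^3 - 8*c*s^3]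

lemma transP0aux (c s : ℝ) : (P0aux c s)ᵀ = P0auxT c s := by
  ext i j
  fin_cases i <;> fin_cases j <;> rfl

noncomputable def d0aux (c s : ℝ) : Fin 4 → ℝ :=
  ![2 - 4*c*s,
    -((2 - 4*c*s) * (2*s*(c - s))^2),
    -(32*c*s^5*(c - s)^2*(2*c^2 - 1)),
    32*c^3*s^5*(2*c^2 - 1)*(1 + 2*s^2)^2]

set_option maxHeartbeats 2000000 in
lemma baseaux (t : ℝ) :
    (P0aux (Real.cos t) (Real.sin t))ᵀ * Hmat t * P0aux (Real.cos t) (Real.sin t) =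
      Matrix.diagonal (d0aux (Real.cos t) (Real.sin t)) := by
  rw [transP0aux]
  ext i j
  fin_cases i <;> fin_cases j <;>
    simp [P0aux, P0auxT, Hmat, d0aux, Matrix.mul_apply, Fin.sum_univ_four, Matrix.diagonal] <;>
    ring

lemma perm_congr_aux (H Q : Matrix (Fin 4) (Fin 4) ℝ) (d : Fin 4 → ℝ) (σ : Equiv.Perm (Fin 4))
    (h : Qᵀ * H * Q = Matrix.diagonal d) :
    (Q.submatrix id ⇑σ)ᵀ * H * Q.submatrix id ⇑σ = Matrix.diagonal (d ∘ ⇑σ) := by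
  have hb : Function.Bijective (id : Fin 4 → Fin 4) := Function.bijective_id
  rw [Matrix.transpose_submatrix]
  have h1 : (Qᵀ * H).submatrix ⇑σ id = Qᵀ.submatrix ⇑σ id * H := by
    rw [Matrix.submatrix_mul Qᵀ H ⇑σ id id hb, Matrix.submatrix_id_id]
  have h2 : (Qᵀ * H * Q).submatrix ⇑σ ⇑σ = (Qᵀ * H).submatrix ⇑σ id * Q.submatrix id ⇑σ :=
    Matrix.submatrix_mul _ _ _ id _ hb
  rw [← h1, ← h2, h, Matrix.submatrix_diagonal d ⇑σ σ.injective]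

lemma finish_aux (t : ℝ) (P : Matrix (Fin 4) (Fin 4) ℝ) (d : Fin 4 → ℝ)
    (hP : Pᵀ * Hmat t * P = Matrix.diagonal d)
    (h0 : 0 < d 0) (h1 : 0 < d 1) (h2 : d 2 < 0) (h3 : d 3 < 0) :
    (Hmat t).det ≠ 0 ∧
      ∃ P : Matrix (Fin 4) (Fin 4) ℝ, IsUnit P.det ∧
        ∃ d : Fin 4 → ℝ, Pᵀ * Hmat t * P = Matrix.diagonal d ∧
          0 < d 0 ∧ 0 < d 1 ∧ d 2 < 0 ∧ d 3 < 0 := by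
  have hdet := congrArg Matrix.det hP
  rw [Matrix.det_mul, Matrix.det_mul, Matrix.det_transpose, Matrix.det_diagonal,
    Fin.prod_univ_four] at hdet
  have hprod : 0 < d 0 * d 1 * d 2 * d 3 := by
    nlinarith [mul_pos (mul_pos h0 h1) (mul_pos_of_neg_of_neg h2 h3)]
  have hH : (Hmat t).det ≠ 0 := by
    intro h; rw [h] at hdet
    have h0' : (0:ℝ) = d 0 * d 1 * d 2 * d 3 := by rw [← hdet]; ring
    linarith
  have hPd : P.det ≠ 0 := by
    intro h; rw [h] at hdet
    have h0' : (0:ℝ) = d 0 * d 1 * d 2 * d 3 := by rw [← hdet]; ring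
    linarith
  exact ⟨hH, P, isUnit_iff_ne_zero.mpr hPd, d, hP, h0, h1, h2, h3⟩

/-- For all sufficiently small `t ≠ 0`, the Hessian matrix `H(t)` is nonsingular and has
signature 0: it is congruent (by an invertible matrix) to a diagonal matrix with two
positive and two negative entries. -/
theorem stmt17 :
    ∃ ε > 0, ∀ t : ℝ, t ≠ 0 → |t| < ε →
      (Hmat t).det ≠ 0 ∧
      ∃ P : Matrix (Fin 4) (Fin 4) ℝ, IsUnit P.det ∧
        ∃ d : Fin 4 → ℝ, Pᵀ * Hmat t * P = Matrix.diagonal d ∧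
          0 < d 0 ∧ 0 < d 1 ∧ d 2 < 0 ∧ d 3 < 0 := by
  refine ⟨1/2, by norm_num, ?_⟩
  intro t ht hlt
  obtain ⟨hlt1, hlt2⟩ := abs_lt.mp hlt
  have hpyth : Real.sin t ^ 2 + Real.cos t ^ 2 = 1 := Real.sin_sq_add_cos_sq t
  set c := Real.cos t with hcdef
  set s := Real.sin t with hsdef
  have hcos : 1 - t^2/2 ≤ c := Real.one_sub_sq_div_two_le_cos
  have hc : (7:ℝ)/8 < c := by nlinarith
  have hcle : c ≤ 1 := Real.cos_le_one t
  have hc0 : (0:ℝ) < c := by linarith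
  have hs2 : s^2 < 1/4 := by nlinarith
  have hs12 : s < 1/2 := by nlinarith
  have hscle : s < c := by nlinarith [sq_nonneg (s - 7/8)]
  have hcs0 : 0 < c - s := by linarith
  have h2c : 0 < 2*c^2 - 1 := by nlinarith
  have hd0 : 0 < 2 - 4*c*s := by
    nlinarith [mul_pos hc0 (show (0:ℝ) < 1/2 - s by linarith)]
  have hpi : (3:ℝ) < Real.pi := Real.pi_gt_three
  have hsne : s ≠ 0 := by
    rcases ht.lt_or_gt with h | h
    · have h' : 0 < Real.sin (-t) := Real.sin_pos_of_pos_of_lt_pi (by linarith) (by linarith)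
      rw [Real.sin_neg] at h'
      exact ne_of_lt (by rw [hsdef]; linarith)
    · exact ne_of_gt (by rw [hsdef]; exact Real.sin_pos_of_pos_of_lt_pi h (by linarith))
  have hcssq : 0 < (c - s)^2 := pow_two_pos_of_ne_zero (ne_of_gt hcs0)
  have hq2 : -((2 - 4*c*s) * (2*s*(c - s))^2) < 0 := by
    have h1 : 2*s*(c-s) ≠ 0 := mul_ne_zero (mul_ne_zero two_ne_zero hsne) (ne_of_gt hcs0)
    have h2 : 0 < (2*s*(c-s))^2 := pow_two_pos_of_ne_zero h1
    have h3 : 0 < (2 - 4*c*s) * (2*s*(c - s))^2 := mul_pos hd0 h2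
    linarith
  have hs4 : 0 < (s^2)^2 := pow_two_pos_of_ne_zero (pow_ne_zero 2 hsne)
  rcases ht.lt_or_gt with hneg | hpos
  · -- t < 0 : sin t < 0
    have hs0 : s < 0 := by
      have h' : 0 < Real.sin (-t) := Real.sin_pos_of_pos_of_lt_pi (by linarith) (by linarith)
      rw [Real.sin_neg] at h'
      rw [hsdef]; linarith
    have hs5 : s^5 < 0 := by
      have h' : s * (s^2)^2 < 0 := mul_neg_of_neg_of_pos hs0 hs4
      calc s^5 = s * (s^2)^2 := by ring
        _ < 0 := h'
    have hA : 0 < 32 * (c*(c - s)^2*(2*c^2 - 1)) :=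
      mul_pos (by norm_num) (mul_pos (mul_pos hc0 hcssq) h2c)
    have hq3 : 0 < -(32*c*s^5*(c - s)^2*(2*c^2 - 1)) := by
      have h' : 32 * (c*(c - s)^2*(2*c^2 - 1)) * s^5 < 0 := mul_neg_of_pos_of_neg hA hs5
      have he : 32*c*s^5*(c - s)^2*(2*c^2 - 1) = 32 * (c*(c - s)^2*(2*c^2 - 1)) * s^5 := by ring
      rw [he]; linarith
    have hq4 : 32*c^3*s^5*(2*c^2 - 1)*(1 + 2*s^2)^2 < 0 := by
      have hB : 0 < 32 * (c^3*(2*c^2 - 1)*(1 + 2*s^2)^2) :=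
        mul_pos (by norm_num) (mul_pos (mul_pos (pow_pos hc0 3) h2c) (by positivity))
      have h' : 32 * (c^3*(2*c^2 - 1)*(1 + 2*s^2)^2) * s^5 < 0 := mul_neg_of_pos_of_neg hB hs5
      have he : 32*c^3*s^5*(2*c^2 - 1)*(1 + 2*s^2)^2
          = 32 * (c^3*(2*c^2 - 1)*(1 + 2*s^2)^2) * s^5 := by ring
      rw [he]; exact h'
    have hP := perm_congr_aux (Hmat t) (P0aux c s) (d0aux c s) (Equiv.swap 1 2) (baseaux t)
    refine finish_aux t _ _ hP ?_ ?_ ?_ ?_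
    · simpa [d0aux, Equiv.swap_apply_def] using hd0
    · simpa [d0aux, Equiv.swap_apply_def] using hq3
    · simpa [d0aux, Equiv.swap_apply_def] using hq2
    · simpa [d0aux, Equiv.swap_apply_def] using hq4
  · -- t > 0 : sin t > 0
    have hs0 : 0 < s := by
      rw [hsdef]; exact Real.sin_pos_of_pos_of_lt_pi hpos (by linarith)
    have hs5 : 0 < s^5 := pow_pos hs0 5
    have hA : 0 < 32 * (c*(c - s)^2*(2*c^2 - 1)) :=
      mul_pos (by norm_num) (mul_pos (mul_pos hc0 hcssq) h2c)
    have hq3 : -(32*c*s^5*(c - s)^2*(2*c^2 - 1)) < 0 := by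
      have h' : 0 < 32 * (c*(c - s)^2*(2*c^2 - 1)) * s^5 := mul_pos hA hs5
      have he : 32*c*s^5*(c - s)^2*(2*c^2 - 1) = 32 * (c*(c - s)^2*(2*c^2 - 1)) * s^5 := by ring
      rw [he]; linarith
    have hq4 : 0 < 32*c^3*s^5*(2*c^2 - 1)*(1 + 2*s^2)^2 := by
      have hB : 0 < 32 * (c^3*(2*c^2 - 1)*(1 + 2*s^2)^2) :=
        mul_pos (by norm_num) (mul_pos (mul_pos (pow_pos hc0 3) h2c) (by positivity))
      have h' : 0 < 32 * (c^3*(2*c^2 - 1)*(1 + 2*s^2)^2) * s^5 := mul_pos hB hs5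
      have he : 32*c^3*s^5*(2*c^2 - 1)*(1 + 2*s^2)^2
          = 32 * (c^3*(2*c^2 - 1)*(1 + 2*s^2)^2) * s^5 := by ring
      rw [he]; exact h'
    have hP := perm_congr_aux (Hmat t) (P0aux c s) (d0aux c s) (Equiv.swap 1 3) (baseaux t)
    refine finish_aux t _ _ hP ?_ ?_ ?_ ?_
    · simpa [d0aux, Equiv.swap_apply_def] using hd0
    · simpa [d0aux, Equiv.swap_apply_def] using hq4
    · simpa [d0aux, Equiv.swap_apply_def] using hq3
    · simpa [d0aux, Equiv.swap_apply_def] using hq2
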